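/- arXiv:1104.4905 — 5 statements merged into one kernel-verified Lean document; each statement's English description precedes it below -/
import Mathlib

section
/- If a polynomial f ∈ ℝ[x,u,v] vanishes on B × U × V, where B × U ⊆ ℝⁿ × ℝᵖ has nonempty interior and V = {v ∈ ℝᵐ : vᵀv = 1} is the unit sphere, and if the ideal J = (1 - vᵀv) ⊆ ℝ[v] satisfies I(V) = J, then f belongs to the ideal generated by 1 - vᵀv in ℝ[x,u,v]. -/
/-!
Read `f` as a polynomial in `(x, u)` with coefficients in `ℝ[v]`. For each `v` on the sphere,
specializing the coefficients at `v` gives a polynomial in `(x, u)` vanishing on `B × U`, which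
has nonempty interior, so it is zero. Hence every coefficient vanishes on the sphere and is a
multiple of `1 - vᵀv`.
-/

namespace MvPolynomial

theorem eq_zero_of_eval_eq_zero_of_nonempty_interior {𝕜 σ : Type*} [NontriviallyNormedField 𝕜]
    [Fintype σ] {S : Set (σ → 𝕜)} (hS : (interior S).Nonempty) {g : MvPolynomial σ 𝕜}
    (hg : ∀ x ∈ S, eval x g = 0) : g = 0 := by
  obtain ⟨x, hx⟩ := hS
  obtain ⟨r, hr, hball⟩ := Metric.isOpen_iff.mp isOpen_interior x hx
  refine funext_set (fun i ↦ Metric.ball (x i) r)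
    (fun i ↦ infinite_of_mem_nhds (x i) (Metric.ball_mem_nhds _ hr)) fun y hy ↦ ?_
  rw [← ball_pi x hr] at hy
  simpa using hg y (interior_subset (hball hy))

section sum

variable {R S₁ S₂ : Type*} [CommSemiring R]

theorem eval_map_eval_sumRingEquiv (x : S₁ → R) (y : S₂ → R) (f : MvPolynomial (S₁ ⊕ S₂) R) :
    eval x (map (eval y) (sumRingEquiv R S₁ S₂ f)) = eval (Sum.elim x y) f := by
  induction f using MvPolynomial.induction_on with
  | C a => simp [sumRingEquiv_C]
  | add f g hf hg => simp [hf, hg]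
  | mul_X f s hf => rcases s with s | s <;> simp [hf, sumRingEquiv_X_inl, sumRingEquiv_X_inr]

theorem sumRingEquiv_rename_inr (q : MvPolynomial S₂ R) :
    sumRingEquiv R S₁ S₂ (rename Sum.inr q) = C q := by
  induction q using MvPolynomial.induction_on with
  | C a => simp [sumRingEquiv_C]
  | add f g hf hg => simp [hf, hg]
  | mul_X f s hf => simp [hf, sumRingEquiv_X_inr]

theorem rename_inr_dvd_iff {q : MvPolynomial S₂ R} {f : MvPolynomial (S₁ ⊕ S₂) R} :
    rename Sum.inr q ∣ f ↔ ∀ d, q ∣ coeff d (sumRingEquiv R S₁ S₂ f) := by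
  rw [← map_dvd_iff (sumRingEquiv R S₁ S₂), sumRingEquiv_rename_inr, C_dvd_iff_dvd_coeff]

end sum

theorem rename_inr_dvd_of_eval_eq_zero {𝕜 σ τ : Type*} [NontriviallyNormedField 𝕜] [Fintype σ]
    {S : Set (σ → 𝕜)} (hS : (interior S).Nonempty) {V : Set (τ → 𝕜)} {q : MvPolynomial τ 𝕜}
    (hq : ∀ g : MvPolynomial τ 𝕜, (∀ v ∈ V, eval v g = 0) → q ∣ g)
    {f : MvPolynomial (σ ⊕ τ) 𝕜} (hf : ∀ x ∈ S, ∀ v ∈ V, eval (Sum.elim x v) f = 0) :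
    rename Sum.inr q ∣ f := by
  refine rename_inr_dvd_iff.mpr fun d ↦ hq _ fun v hv ↦ ?_
  have hslice : map (eval v) (sumRingEquiv 𝕜 σ τ f) = 0 :=
    eq_zero_of_eval_eq_zero_of_nonempty_interior hS fun x hx ↦ by
      rw [eval_map_eval_sumRingEquiv]; exact hf x hx v hv
  rw [← coeff_map, hslice, coeff_zero]

end MvPolynomial

open MvPolynomial

/-- If a polynomial `f ∈ ℝ[x,u,v]` vanishes on `B × U × V`, where
`B × U ⊆ ℝⁿ × ℝᵖ` has nonempty interior and `V` is the unit sphere of `ℝᵐ`,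
and if every polynomial of `ℝ[v]` vanishing on `V` is a multiple of
`1 - vᵀv`, then `f = (vᵀv - 1)·h` for some `h ∈ ℝ[x,u,v]`. -/
theorem vanishing_poly_mem_sphere_ideal
    {n p m : ℕ}
    (B : Set (Fin n → ℝ)) (U : Set (Fin p → ℝ))
    (hint : (interior (B ×ˢ U)).Nonempty)
    (hideal : ∀ g : MvPolynomial (Fin m) ℝ,
      (∀ v : Fin m → ℝ, (∑ i, v i ^ 2) = 1 → eval v g = 0) →
      (1 - ∑ i, X i ^ 2) ∣ g)
    (f : MvPolynomial (Fin n ⊕ Fin p ⊕ Fin m) ℝ)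
    (hf : ∀ x ∈ B, ∀ u ∈ U, ∀ v : Fin m → ℝ, (∑ i, v i ^ 2) = 1 →
      eval (Sum.elim x (Sum.elim u v)) f = 0) :
    ∃ h : MvPolynomial (Fin n ⊕ Fin p ⊕ Fin m) ℝ,
      f = ((∑ i, X (Sum.inr (Sum.inr i)) ^ 2) - 1) * h := by
  let e := Equiv.sumAssoc (Fin n) (Fin p) (Fin m)
  let φ := Homeomorph.sumArrowHomeomorphProdArrow (ι := Fin n) (ι' := Fin p) (X := ℝ)
  have hS : (interior (φ ⁻¹' (B ×ˢ U))).Nonempty := by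
    rw [← φ.preimage_interior]
    exact hint.preimage φ.surjective
  have hdvd := rename_inr_dvd_of_eval_eq_zero hS (V := {v | ∑ i, v i ^ 2 = 1}) hideal
    (f := rename e.symm f) fun w hw v hv ↦ by
      have hpoint : Sum.elim w v ∘ e.symm = Sum.elim (φ w).1 (Sum.elim (φ w).2 v) := by
        funext s; rcases s with i | j | k <;> rfl
      rw [eval_rename, hpoint]
      exact hf _ hw.1 _ hw.2 v hv
  obtain ⟨k, hk⟩ := map_dvd (rename e) hdvd
  have hsphere : rename e (rename Sum.inr (1 - ∑ i, X i ^ 2 : MvPolynomial (Fin m) ℝ)) =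
      1 - ∑ i, X (Sum.inr (Sum.inr i)) ^ 2 := by
    simp [e]
  rw [rename_rename, e.self_comp_symm, rename_id_apply, hsphere] at hk
  exact ⟨-k, by rw [hk]; ring⟩
end

section
/- For m ≥ 2, every polynomial in ℝ[v₁,…,v_m] vanishing on the unit sphere {v : vᵀv = 1} is divisible by 1 - vᵀv. -/
open MvPolynomial

/-- A multivariate real polynomial vanishing on the open unit ball is zero. -/
lemma mv_zero_of_ball {n : ℕ} (a : MvPolynomial (Fin n) ℝ)
    (h : ∀ w : Fin n → ℝ, (∑ i, w i ^ 2) < 1 → eval w a = 0) : a = 0 := by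
  apply MvPolynomial.funext
  intro u
  simp only [map_zero]
  set P : Polynomial ℝ := MvPolynomial.eval₂ Polynomial.C
      (fun i => Polynomial.C (u i) * Polynomial.X) a with hP
  have key : ∀ c : ℝ, Polynomial.eval c P = eval (fun i => u i * c) a := by
    intro c
    rw [hP, ← Polynomial.coe_evalRingHom, MvPolynomial.eval₂_comp_left]
    have h1 : (Polynomial.evalRingHom c).comp Polynomial.C = RingHom.id ℝ := by
      ext r; simp
    have h2 : ((Polynomial.evalRingHom c : Polynomial ℝ →+* ℝ) ∘
        fun i => Polynomial.C (u i) * Polynomial.X) = fun i => u i * c := by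
      funext i; simp
    rw [h1, h2, MvPolynomial.eval₂_id]
  set S : ℝ := ∑ i, u i ^ 2 with hS
  have hS0 : 0 ≤ S := Finset.sum_nonneg fun i _ => sq_nonneg _
  set δ : ℝ := min 1 (1 / (S + 1)) with hδ
  have hδ0 : 0 < δ := lt_min one_pos (by positivity)
  have hroots : ∀ c ∈ Set.Ioo (0:ℝ) δ, Polynomial.eval c P = 0 := by
    intro c hc
    rw [key]
    apply h
    have hc0 : 0 < c := hc.1
    have hc1 : c < 1 := lt_of_lt_of_le hc.2 (min_le_left _ _)
    have hc2 : c < 1 / (S + 1) := lt_of_lt_of_le hc.2 (min_le_right _ _)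
    have heq : (∑ i, (u i * c) ^ 2) = S * c ^ 2 := by
      rw [hS, Finset.sum_mul]
      congr 1; ext i; ring
    rw [heq]
    have h3 : c ^ 2 ≤ c := by nlinarith
    have h4 : S * c ^ 2 ≤ S * c := mul_le_mul_of_nonneg_left h3 hS0
    have h5 : S * c ≤ S * (1 / (S + 1)) := mul_le_mul_of_nonneg_left hc2.le hS0
    have h6 : S * (1 / (S + 1)) < 1 := by
      rw [mul_one_div, div_lt_one (by linarith)]; linarith
    linarith
  have hP0 : P = 0 := by
    apply Polynomial.eq_zero_of_infinite_isRoot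
    apply Set.Infinite.mono (s := Set.Ioo (0:ℝ) δ)
    · intro c hc; exact hroots c hc
    · exact Set.Ioo_infinite hδ0
  have := key 1
  rw [hP0] at this
  simpa using this.symm

/-- Every polynomial in `ℝ[v₁,…,v_m]` (`m ≥ 2`) vanishing on the unit sphere
`{v : vᵀv = 1}` is divisible by `1 - vᵀv`. -/
theorem sphere_vanishing_ideal
    {m : ℕ} (hm : 2 ≤ m) (g : MvPolynomial (Fin m) ℝ)
    (hg : ∀ v : Fin m → ℝ, (∑ i, v i ^ 2) = 1 → eval v g = 0) :
    (1 - ∑ i, X i ^ 2 : MvPolynomial (Fin m) ℝ) ∣ g := by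
  obtain ⟨n, rfl⟩ : ∃ n, m = n + 1 := ⟨m - 1, by omega⟩
  have hqmonic : (Polynomial.X ^ 2 - Polynomial.C (1 - ∑ i, X i ^ 2) :
      Polynomial (MvPolynomial (Fin n) ℝ)).Monic :=
    Polynomial.monic_X_pow_sub_C _ (by norm_num)
  set e := MvPolynomial.finSuccEquiv ℝ n with he
  set c : MvPolynomial (Fin n) ℝ := 1 - ∑ i, X i ^ 2 with hc
  set q : Polynomial (MvPolynomial (Fin n) ℝ) := Polynomial.X ^ 2 - Polynomial.C c with hq
  have hqdeg : q.degree = 2 := Polynomial.degree_X_pow_sub_C (by norm_num) c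
  have hep : e (1 - ∑ i, X i ^ 2 : MvPolynomial (Fin (n+1)) ℝ) = -q := by
    rw [he, hq, hc, map_sub, map_one, map_sum, Fin.sum_univ_succ]
    simp only [map_pow, MvPolynomial.finSuccEquiv_X_zero, MvPolynomial.finSuccEquiv_X_succ]
    rw [map_sub, map_one, map_sum]
    simp only [map_pow]
    ring
  set r := e g %ₘ q with hr
  have hrdeg : r.degree < 2 := hqdeg ▸ Polynomial.degree_modByMonic_lt (e g) hqmonic
  have hrdeg1 : r.degree ≤ 1 := Order.lt_succ_iff.mp (by exact_mod_cast hrdeg)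
  have hrep : r = Polynomial.C (r.coeff 1) * Polynomial.X + Polynomial.C (r.coeff 0) :=
    Polynomial.eq_X_add_C_of_degree_le_one hrdeg1
  have hdecomp : e g = q * (e g /ₘ q) + r := by
    rw [hr]
    exact ((Polynomial.modByMonic_add_div (e g) q).symm.trans (add_comm _ _))
  -- evaluate on the sphere
  have hkey : ∀ w : Fin n → ℝ, (∑ i, w i ^ 2) < 1 →
      eval w (r.coeff 0) = 0 ∧ eval w (r.coeff 1) = 0 := by
    intro w hw
    set s : ℝ := ∑ i, w i ^ 2 with hs
    have hs0 : 0 ≤ 1 - s := by linarith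
    set t : ℝ := Real.sqrt (1 - s) with ht
    have ht2 : t ^ 2 = 1 - s := Real.sq_sqrt hs0
    have htpos : 0 < t := Real.sqrt_pos.mpr (by linarith)
    have heval : ∀ y : ℝ, y ^ 2 = 1 - s →
        eval w (r.coeff 0) + eval w (r.coeff 1) * y = 0 := by
      intro y hy
      have hsum : (∑ i, (Fin.cons y w : Fin (n+1) → ℝ) i ^ 2) = 1 := by
        rw [Fin.sum_univ_succ]
        simp only [Fin.cons_zero, Fin.cons_succ]
        rw [hy, ← hs]; ring
      have h0 := hg (Fin.cons y w) hsum
      rw [MvPolynomial.eval_eq_eval_mv_eval', ← he, hdecomp] at h0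
      rw [Polynomial.map_add, Polynomial.map_mul, Polynomial.eval_add,
        Polynomial.eval_mul] at h0
      have hqe : Polynomial.eval y (Polynomial.map (eval w) q) = 0 := by
        rw [hq, Polynomial.map_sub, Polynomial.map_pow, Polynomial.map_X, Polynomial.map_C]
        simp only [Polynomial.eval_sub, Polynomial.eval_pow, Polynomial.eval_X,
          Polynomial.eval_C]
        rw [hy, hc]
        simp [← hs]
      rw [hqe, zero_mul, zero_add, hrep] at h0
      simp only [Polynomial.map_add, Polynomial.map_mul, Polynomial.map_C, Polynomial.map_X,
        Polynomial.eval_add, Polynomial.eval_mul, Polynomial.eval_C, Polynomial.eval_X] at h0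
      linarith [h0]
    have h1 := heval t ht2
    have h2 := heval (-t) (by rw [← ht2]; ring)
    constructor
    · nlinarith [h1, h2]
    · nlinarith [h1, h2, htpos]
  have ha : r.coeff 0 = 0 := mv_zero_of_ball _ fun w hw => (hkey w hw).1
  have hb : r.coeff 1 = 0 := mv_zero_of_ball _ fun w hw => (hkey w hw).2
  have hr0 : r = 0 := by rw [hrep, ha, hb]; simp
  have hq_dvd : q ∣ e g := by
    rw [hdecomp, hr0, add_zero]; exact Dvd.intro _ rfl
  have hdvd : e (1 - ∑ i, X i ^ 2 : MvPolynomial (Fin (n+1)) ℝ) ∣ e g := by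
    rw [hep]; exact (neg_dvd).mpr hq_dvd
  have hfin := map_dvd e.symm hdvd
  simpa using hfin
end

section
/- Let c : K → ℝ be continuous on K = B × U × V with B, U, V compact and λ(x) = min_{(u,v) ∈ U×V} c(x,u,v). Then the minimum over all finite Borel measures μ on K whose B-marginal is Lebesgue measure on B of ∫_K c dμ equals ∫_B λ(x) dx. -/
/-!
The measure carried by the graph of a minimiser `s(x) ∈ argmin c(x, ·)` over `U × V` has
`B`-marginal the Lebesgue measure and cost `∫_B λ`, while any admissible `μ` costs at least
`∫ λ(x) dμ(x, y) = ∫_B λ`, because `λ(x) ≤ c(x, y)` on `K`. The only difficulty is to choose `s`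
measurably. By the Hausdorff–Alexandroff theorem `U × V` is a continuous image of the Cantor
set `C ⊆ ℝ`; on `C` take the least minimiser `σ(x)`. It is measurable because `σ(x) ≤ a` iff
the minimum of `c(x, ·)` over `C ∩ (-∞, a]` is at most its minimum over `C`, a comparison of two
upper semicontinuous functions of `x`.
-/

open MeasureTheory Set Function

theorem IsCompact.exists_continuousOn_image_cantorSet_eq {E : Type*} [MetricSpace E] {W : Set E}
    (hW : IsCompact W) (hWne : W.Nonempty) :
    ∃ φ : ℝ → E, ContinuousOn φ cantorSet ∧ φ '' cantorSet = W := by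
  classical
  have : CompactSpace W := isCompact_iff_compactSpace.1 hW
  have : Nonempty W := hWne.to_subtype
  obtain ⟨f, hf, hfsurj⟩ := exists_nat_bool_continuous_surjective_of_compact W
  set g : cantorSet → W := f ∘ cantorSetHomeomorphNatToBool
  have hgsurj : Surjective g := hfsurj.comp cantorSetHomeomorphNatToBool.surjective
  set φ : ℝ → E := fun t ↦ if ht : t ∈ cantorSet then g ⟨t, ht⟩ else hWne.some
  have hφg : cantorSet.domRestrict φ = fun t ↦ (g t : E) := funext fun t ↦ dif_pos t.2
  refine ⟨φ, ?_, ?_⟩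
  · rw [continuousOn_iff_continuous_domRestrict, hφg]
    fun_prop
  · ext y
    refine ⟨?_, fun hy ↦ ?_⟩
    · rintro ⟨t, ht, rfl⟩
      rw [show φ t = g ⟨t, ht⟩ from congrFun hφg ⟨t, ht⟩]
      exact (g ⟨t, ht⟩).2
    · obtain ⟨t, ht⟩ := hgsurj ⟨y, hy⟩
      exact ⟨t, t.2, (congrFun hφg t).trans (congrArg Subtype.val ht)⟩

section MeasurableArgmin

variable {X T : Type*} [TopologicalSpace X] [MeasurableSpace X] [OpensMeasurableSpace X]
  [TopologicalSpace T]

lemma measurable_iInf_of_continuousOn {D : Set T} (hD : IsCompact D) {G : X → T → ℝ}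
    (hG : ContinuousOn (uncurry G) (univ ×ˢ D)) :
    Measurable fun x ↦ ⨅ t : D, G x t := by
  refine (upperSemicontinuous_ciInf (fun x ↦ ?_) fun t ↦ ?_).measurable
  · rw [← image_eq_range]
    exact hD.bddBelow_image (hG.uncurry_left x (mem_univ x))
  · exact continuousOn_univ.1 (hG.uncurry_right (t : T) t.2) |>.upperSemicontinuous

lemma measurableSet_exists_le_of_continuousOn {D : Set T} (hD : IsCompact D) {G : X → T → ℝ}
    (hG : ContinuousOn (uncurry G) (univ ×ˢ D)) {f : X → ℝ} (hf : Measurable f) :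
    MeasurableSet {x | ∃ t ∈ D, G x t ≤ f x} := by
  rcases D.eq_empty_or_nonempty with rfl | hDne
  · simp
  have hset : {x | ∃ t ∈ D, G x t ≤ f x} = {x | ⨅ t : D, G x t ≤ f x} := by
    ext x
    obtain ⟨t₀, ht₀, hmin⟩ := hD.exists_isMinOn hDne (hG.uncurry_left x (mem_univ x))
    simp only [mem_ofPred_eq, hmin.iInf_eq ht₀]
    exact ⟨fun ⟨t, ht, hle⟩ ↦ (hmin ht).trans hle, fun h ↦ ⟨t₀, ht₀, h⟩⟩
  rw [hset]
  exact measurableSet_le (measurable_iInf_of_continuousOn hD hG) hf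

theorem exists_measurable_isMinOn_real {C : Set ℝ} (hC : IsCompact C) (hCne : C.Nonempty)
    {G : X → ℝ → ℝ} (hG : ContinuousOn (uncurry G) (univ ×ˢ C)) :
    ∃ σ : X → ℝ, Measurable σ ∧ ∀ x, σ x ∈ C ∧ IsMinOn (G x) C (σ x) := by
  have hGx : ∀ x, ContinuousOn (G x) C := fun x ↦ hG.uncurry_left x (mem_univ x)
  choose t₀ ht₀ hmin using fun x ↦ hC.exists_isMinOn hCne (hGx x)
  set argmin : X → Set ℝ := fun x ↦ C ∩ G x ⁻¹' Iic (G x (t₀ x))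
  have hleast : ∀ x, IsLeast (argmin x) (sInf (argmin x)) := fun x ↦
    (hC.of_isClosed_subset ((hGx x).preimage_isClosed_of_isClosed hC.isClosed isClosed_Iic)
      inter_subset_left).isLeast_sInf ⟨t₀ x, ht₀ x, le_refl (G x (t₀ x))⟩
  refine ⟨fun x ↦ sInf (argmin x), measurable_of_Iic fun a ↦ ?_, fun x ↦
    ⟨(hleast x).1.1, isMinOn_iff.2 fun t ht ↦ (hleast x).1.2.trans (hmin x ht)⟩⟩
  have hpre : (fun x ↦ sInf (argmin x)) ⁻¹' Iic a =
      {x | ∃ t ∈ C ∩ Iic a, G x t ≤ ⨅ t : C, G x t} := by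
    ext x
    simp only [mem_preimage, mem_Iic, mem_ofPred_eq, (hmin x).iInf_eq (ht₀ x)]
    exact ⟨fun h ↦ ⟨_, ⟨(hleast x).1.1, h⟩, (hleast x).1.2⟩,
      fun ⟨t, ⟨htC, hta⟩, ht⟩ ↦ ((hleast x).2 ⟨htC, ht⟩).trans hta⟩
  rw [hpre]
  exact measurableSet_exists_le_of_continuousOn (hC.inter_right isClosed_Iic)
    (hG.mono (prod_mono subset_rfl inter_subset_left)) (measurable_iInf_of_continuousOn hC hG)

theorem exists_measurable_isMinOn {E : Type*} [MetricSpace E] [MeasurableSpace E] [BorelSpace E]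
    {W : Set E} (hW : IsCompact W) (hWne : W.Nonempty) {c : X → E → ℝ}
    (hc : Continuous (uncurry c)) :
    ∃ s : X → E, Measurable s ∧ ∀ x, s x ∈ W ∧ IsMinOn (c x) W (s x) := by
  obtain ⟨φ, hφ, hφW⟩ := hW.exists_continuousOn_image_cantorSet_eq hWne
  obtain ⟨σ, hσ, hσC⟩ := exists_measurable_isMinOn_real isCompact_cantorSet
    ⟨0, zero_mem_cantorSet⟩ (G := fun x t ↦ c x (φ t))
    (hc.comp_continuousOn (continuousOn_fst.prodMk (hφ.comp continuousOn_snd fun _ hz ↦ hz.2)))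
  refine ⟨φ ∘ σ, ?_, fun x ↦ ⟨hφW ▸ mem_image_of_mem φ (hσC x).1, ?_⟩⟩
  · exact (continuousOn_iff_continuous_domRestrict.1 hφ).measurable.comp
      (hσ.subtype_mk (h := fun x ↦ (hσC x).1))
  · rw [← hφW, isMinOn_iff]
    rintro _ ⟨t, ht, rfl⟩
    exact isMinOn_iff.1 (hσC x).2 t ht

end MeasurableArgmin

section GraphMeasure

variable {X Y : Type*} [MeasurableSpace X] [MeasurableSpace Y]

lemma map_fst_map_graph (ν : Measure X) {s : X → Y} (hs : Measurable s) :
    (ν.map fun x ↦ (x, s x)).map Prod.fst = ν := by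
  rw [Measure.map_map measurable_fst (measurable_id'.prodMk hs)]
  exact Measure.map_id

lemma map_graph_compl_prod_eq_zero {ν : Measure X} {s : X → Y} (hs : Measurable s)
    {B : Set X} {W : Set Y} (hB : MeasurableSet B) (hW : MeasurableSet W)
    (hνB : ∀ᵐ x ∂ν, x ∈ B) (hsW : ∀ x ∈ B, s x ∈ W) :
    (ν.map fun x ↦ (x, s x)) (B ×ˢ W)ᶜ = 0 := by
  rw [Measure.map_apply (measurable_id'.prodMk hs) (hB.prod hW).compl]
  exact measure_mono_null (fun x hx hxB ↦ hx ⟨hxB, hsW x hxB⟩) (ae_iff.1 hνB)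

lemma integral_le_integral_of_map_fst_eq {μ : Measure (X × Y)} {ν : Measure X}
    (hμ : μ.map Prod.fst = ν) {f : X → ℝ} {g : X × Y → ℝ} (hf : Integrable f ν)
    (hg : Integrable g μ) (hfg : ∀ᵐ z ∂μ, f z.1 ≤ g z) :
    ∫ x, f x ∂ν ≤ ∫ z, g z ∂μ := by
  subst hμ
  rw [integral_map measurable_fst.aemeasurable hf.aestronglyMeasurable]
  exact integral_mono_ae
    ((integrable_map_measure hf.aestronglyMeasurable measurable_fst.aemeasurable).1 hf) hg hfg

end GraphMeasure

lemma ContinuousOn.integrable_of_measure_compl_eq_zero {Z : Type*} [TopologicalSpace Z]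
    [T2Space Z] [MeasurableSpace Z] [OpensMeasurableSpace Z] {μ : Measure Z} [IsFiniteMeasure μ]
    {K : Set Z} {f : Z → ℝ} (hf : ContinuousOn f K) (hK : IsCompact K) (hμK : μ Kᶜ = 0) :
    Integrable f μ := by
  have hfK := hf.integrableOn_compact (μ := μ) hK
  rwa [IntegrableOn, Measure.restrict_eq_self_of_ae_mem (ae_iff.2 hμK)] at hfK

theorem lp_min_eq_integral_min_general
    {n p m : ℕ}
    (B : Set (Fin n → ℝ)) (U : Set (Fin p → ℝ)) (V : Set (Fin m → ℝ))
    (hB : IsCompact B)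
    (hU : IsCompact U) (hUne : U.Nonempty)
    (hV : IsCompact V) (hVne : V.Nonempty)
    (c : (Fin n → ℝ) × (Fin p → ℝ) × (Fin m → ℝ) → ℝ) (hc : Continuous c)
    (lam : (Fin n → ℝ) → ℝ)
    (hlam : ∀ x, lam x = sInf {r : ℝ | ∃ u ∈ U, ∃ v ∈ V, r = c (x, u, v)}) :
    IsLeast {r : ℝ |
        ∃ μ : Measure ((Fin n → ℝ) × (Fin p → ℝ) × (Fin m → ℝ)),
          IsFiniteMeasure μ ∧ μ (B ×ˢ (U ×ˢ V))ᶜ = 0 ∧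
          Measure.map Prod.fst μ = volume.restrict B ∧
          r = ∫ z, c z ∂μ}
      (∫ x in B, lam x) := by
  obtain ⟨s, hs, hsmin⟩ := exists_measurable_isMinOn (hU.prod hV) (hUne.prod hVne)
    (c := fun x y ↦ c (x, y)) hc
  have hlam_eq : lam = fun x ↦ c (x, s x) := funext fun x ↦ (hlam x).trans <| IsLeast.csInf_eq
    ⟨⟨(s x).1, (hsmin x).1.1, (s x).2, (hsmin x).1.2, rfl⟩,
      by rintro _ ⟨u, hu, v, hv, rfl⟩; exact (hsmin x).2 ⟨hu, hv⟩⟩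
  subst hlam_eq
  have hint : ∀ μ : Measure ((Fin n → ℝ) × (Fin p → ℝ) × (Fin m → ℝ)), IsFiniteMeasure μ →
      μ (B ×ˢ (U ×ˢ V))ᶜ = 0 → Integrable c μ := fun μ _ hμ ↦
    hc.continuousOn.integrable_of_measure_compl_eq_zero (hB.prod (hU.prod hV)) hμ
  have : IsFiniteMeasure (volume.restrict B) := isFiniteMeasure_restrict.2 hB.measure_lt_top.ne
  have hgraph := map_graph_compl_prod_eq_zero (ν := volume.restrict B) hs hB.isClosed.measurableSet
    (hU.prod hV).isClosed.measurableSet (ae_restrict_mem hB.isClosed.measurableSet)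
    fun x _ ↦ (hsmin x).1
  refine ⟨⟨_, inferInstance, hgraph, map_fst_map_graph _ hs,
    (integral_map (measurable_id'.prodMk hs).aemeasurable hc.aestronglyMeasurable).symm⟩, ?_⟩
  rintro _ ⟨μ, hμ, hμK, hμB, rfl⟩
  refine integral_le_integral_of_map_fst_eq hμB ?_ (hint μ hμ hμK) ?_
  · exact (integrable_map_measure hc.aestronglyMeasurable
      (measurable_id'.prodMk hs).aemeasurable).1 (hint _ inferInstance hgraph)
  · filter_upwards [ae_iff.2 hμK] with z hz
    exact (hsmin z.1).2 hz.2

/-- The infinite-dimensional LP: the minimum of `∫_K c dμ` over all finite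
Borel measures `μ` on `K = B × U × V` whose `B`-marginal is the Lebesgue
measure on `B` equals `∫_B λ(x) dx`, where
`λ(x) = min_{(u,v) ∈ U × V} c(x,u,v)`. -/
theorem lp_min_eq_integral_min
    {n p m : ℕ}
    (B : Set (Fin n → ℝ)) (U : Set (Fin p → ℝ)) (V : Set (Fin m → ℝ))
    (hB : IsCompact B) (hBvol : 0 < volume B)
    (hU : IsCompact U) (hUne : U.Nonempty)
    (hV : IsCompact V) (hVne : V.Nonempty)
    (c : (Fin n → ℝ) × (Fin p → ℝ) × (Fin m → ℝ) → ℝ) (hc : Continuous c)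
    (lam : (Fin n → ℝ) → ℝ)
    (hlam : ∀ x, lam x = sInf {r : ℝ | ∃ u ∈ U, ∃ v ∈ V, r = c (x, u, v)}) :
    IsLeast {r : ℝ |
        ∃ μ : Measure ((Fin n → ℝ) × (Fin p → ℝ) × (Fin m → ℝ)),
          IsFiniteMeasure μ ∧ μ (B ×ˢ (U ×ˢ V))ᶜ = 0 ∧
          Measure.map Prod.fst μ = volume.restrict B ∧
          r = ∫ z, c z ∂μ}
      (∫ x in B, lam x) :=
  lp_min_eq_integral_min_general B U V hB hU hUne hV hVne c hc lam hlam
end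

section
/- The degree-three discrete-time stability region, i.e., the set of (x₁,x₂,x₃) for which z³ + x₁z² + x₂z + x₃ has all roots in the open unit disk, is contained in the simplex with vertices (-3,3,-1), (-1,-1,1), (1,-1,-1), (3,3,1). -/
/-!
The four vertices are the coefficient vectors of `(z + 1) ^ (3 - k) * (z - 1) ^ k`, `k = 0, …, 3`,
so the barycentric coordinates of `x` are the coordinates of `p_x` in this basis. Splitting off a
real root, `p_x = (z - r) (z² + a z + b)` with `|r| < 1` and the quadratic factor again stable, which
forces `|a| ≤ 1 + b` and `b ≤ 1`. Both factors have nonnegative coordinates in the corresponding bases: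
`2 (z - r) = (1 - r) (z + 1) + (1 + r) (z - 1)` and
`4 (z² + a z + b) = (1 + a + b) (z + 1)² + 2 (1 - b) (z + 1) (z - 1) + (1 - a + b) (z - 1)²`,
hence so does their product `p_x`.
-/

theorem exists_cubic_eq_zero (a b c : ℝ) : ∃ r : ℝ, r ^ 3 + a * r ^ 2 + b * r + c = 0 := by
  set M := 1 + |a| + |b| + |c|
  have hM : 1 ≤ M := by linarith [abs_nonneg a, abs_nonneg b, abs_nonneg c]
  obtain ⟨r, -, hr⟩ : (0 : ℝ) ∈ (fun t => t ^ 3 + a * t ^ 2 + b * t + c) '' Set.Icc (-M) M :=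
    intermediate_value_Icc (by linarith) (by fun_prop)
      ⟨by nlinarith [abs_nonneg a, abs_nonneg b, abs_nonneg c, le_abs_self a, le_abs_self b,
          le_abs_self c, neg_abs_le a, neg_abs_le b, neg_abs_le c, sq_nonneg M],
        by nlinarith [abs_nonneg a, abs_nonneg b, abs_nonneg c, le_abs_self a, le_abs_self b,
          le_abs_self c, neg_abs_le a, neg_abs_le b, neg_abs_le c, sq_nonneg M]⟩
  exact ⟨r, hr⟩

theorem abs_add_le_one_add_mul {s t : ℝ} (hs : |s| ≤ 1) (ht : |t| ≤ 1) :
    |s + t| ≤ 1 + s * t := by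
  rw [abs_le] at *
  constructor <;> nlinarith

theorem abs_le_one_add_and_le_one_of_roots_norm_lt_one {a b : ℝ}
    (h : ∀ z : ℂ, z ^ 2 + a * z + b = 0 → ‖z‖ < 1) : |a| ≤ 1 + b ∧ b ≤ 1 := by
  rcases le_or_gt (4 * b) (a ^ 2) with hD | hD
  · set d := √(a ^ 2 - 4 * b)
    have hd : d ^ 2 = a ^ 2 - 4 * b := Real.sq_sqrt (by linarith)
    have abs_lt_of_root (t : ℝ) (ht : t ^ 2 + a * t + b = 0) : |t| < 1 := by
      simpa using h t (by exact_mod_cast ht)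
    have hs := abs_lt_of_root ((-a + d) / 2) (by linear_combination hd / 4)
    have ht := abs_lt_of_root ((-a - d) / 2) (by linear_combination hd / 4)
    have hsum : (-a + d) / 2 + (-a - d) / 2 = -a := by ring
    have hprod : (-a + d) / 2 * ((-a - d) / 2) = b := by linear_combination -hd / 4
    refine ⟨?_, ?_⟩
    · simpa [hsum, hprod] using abs_add_le_one_add_mul hs.le ht.le
    · rw [← hprod]
      exact (le_abs_self _).trans (by rw [abs_mul]; exact mul_le_one₀ hs.le (abs_nonneg _) ht.le)
  · set e := √(4 * b - a ^ 2)
    have he : e ^ 2 = 4 * b - a ^ 2 := Real.sq_sqrt (by linarith)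
    set α : ℂ := ((-a / 2 : ℝ) : ℂ) + ((e / 2 : ℝ) : ℂ) * Complex.I
    have hα : α ^ 2 + a * α + b = 0 := by
      have he' : (e : ℂ) ^ 2 = 4 * b - a ^ 2 := by exact_mod_cast he
      push_cast [α]
      linear_combination (e ^ 2 / 4 : ℂ) * Complex.I_sq - he' / 4
    have hnorm : ‖α‖ ^ 2 = b := by
      rw [Complex.sq_norm, Complex.normSq_add_mul_I]
      linear_combination he / 4
    have hb : b < 1 := by nlinarith [h α hα, norm_nonneg α]
    exact ⟨abs_le.mpr ⟨by nlinarith, by nlinarith⟩, hb.le⟩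

theorem exists_linear_mul_quadratic_of_roots_norm_lt_one {x₁ x₂ x₃ : ℝ}
    (h : ∀ z : ℂ, z ^ 3 + x₁ * z ^ 2 + x₂ * z + x₃ = 0 → ‖z‖ < 1) :
    ∃ r a b : ℝ, |r| < 1 ∧ (∀ z : ℂ, z ^ 2 + a * z + b = 0 → ‖z‖ < 1) ∧
      x₁ = a - r ∧ x₂ = b - a * r ∧ x₃ = -(b * r) := by
  obtain ⟨r, hr⟩ := exists_cubic_eq_zero x₁ x₂ x₃
  refine ⟨r, x₁ + r, x₂ + (x₁ + r) * r, by simpa using h r (by exact_mod_cast hr),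
    fun z hz => h z ?_, by ring, by ring, by linear_combination hr⟩
  have hr' : (r : ℂ) ^ 3 + x₁ * r ^ 2 + x₂ * r + x₃ = 0 := by exact_mod_cast hr
  push_cast at hz
  linear_combination (z - r) * hz + hr'

theorem mem_convexHull_of_barycentric_nonneg {x : Fin 3 → ℝ}
    (h₀ : 0 ≤ 1 - x 0 + x 1 - x 2) (h₁ : 0 ≤ 3 - x 0 - x 1 + 3 * x 2)
    (h₂ : 0 ≤ 3 + x 0 - x 1 - 3 * x 2) (h₃ : 0 ≤ 1 + x 0 + x 1 + x 2) :
    x ∈ convexHull ℝ {![(-3 : ℝ), 3, -1], ![(-1 : ℝ), -1, 1],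
      ![(1 : ℝ), -1, -1], ![(3 : ℝ), 3, 1]} := by
  set v : Fin 4 → Fin 3 → ℝ := ![![-3, 3, -1], ![-1, -1, 1], ![1, -1, -1], ![3, 3, 1]]
  set w : Fin 4 → ℝ :=
    ![(1 - x 0 + x 1 - x 2) / 8, (3 - x 0 - x 1 + 3 * x 2) / 8,
      (3 + x 0 - x 1 - 3 * x 2) / 8, (1 + x 0 + x 1 + x 2) / 8]
  have hx : x = ∑ i, w i • v i := by
    ext j
    fin_cases j <;>
      simp only [Fin.reduceFinMk, Fin.zero_eta, Fin.mk_one, Finset.sum_apply, Pi.smul_apply,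
        smul_eq_mul, Fin.sum_univ_four, Matrix.cons_val, w, v] <;> ring
  rw [hx]
  refine (convex_convexHull ℝ _).sum_mem (fun i _ => ?_) ?_ (fun i _ => subset_convexHull ℝ _ ?_)
  · fin_cases i <;> simp only [Fin.reduceFinMk, Fin.zero_eta, Fin.mk_one, Matrix.cons_val, w] <;> linarith
  · simp only [Fin.sum_univ_four, Matrix.cons_val, w]
    ring
  · fin_cases i <;> simp [v]

theorem coeffs_linear_mul_quadratic_mem_convexHull {r a b : ℝ} (hr : |r| ≤ 1)
    (ha : |a| ≤ 1 + b) (hb : b ≤ 1) :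
    ![a - r, b - a * r, -(b * r)] ∈ convexHull ℝ {![(-3 : ℝ), 3, -1], ![(-1 : ℝ), -1, 1],
      ![(1 : ℝ), -1, -1], ![(3 : ℝ), 3, 1]} := by
  obtain ⟨hr₁, hr₂⟩ := abs_le.mp hr
  obtain ⟨ha₁, ha₂⟩ := abs_le.mp ha
  have w₀ : 0 ≤ (1 + r) * (1 - a + b) := mul_nonneg (by linarith) (by linarith)
  have w₁ : 0 ≤ (1 - r) * (1 - a + b) + 2 * ((1 + r) * (1 - b)) :=
    add_nonneg (mul_nonneg (by linarith) (by linarith))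
      (mul_nonneg zero_le_two (mul_nonneg (by linarith) (by linarith)))
  have w₂ : 0 ≤ (1 + r) * (1 + a + b) + 2 * ((1 - r) * (1 - b)) :=
    add_nonneg (mul_nonneg (by linarith) (by linarith))
      (mul_nonneg zero_le_two (mul_nonneg (by linarith) (by linarith)))
  have w₃ : 0 ≤ (1 - r) * (1 + a + b) := mul_nonneg (by linarith) (by linarith)
  apply mem_convexHull_of_barycentric_nonneg <;> simp only [Matrix.cons_val]
  · linear_combination w₀
  · linear_combination w₁
  · linear_combination w₂
  · linear_combination w₃

/-- The degree-three discrete-time stability region, i.e. the set of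
`(x₁,x₂,x₃) ∈ ℝ³` for which `z³ + x₁z² + x₂z + x₃` has all complex roots in
the open unit disk, is contained in the simplex with vertices
`(-3,3,-1)`, `(-1,-1,1)`, `(1,-1,-1)`, `(3,3,1)`. -/
theorem stability_region_subset_simplex :
    {x : Fin 3 → ℝ | ∀ z : ℂ,
        z ^ 3 + (x 0 : ℂ) * z ^ 2 + (x 1 : ℂ) * z + (x 2 : ℂ) = 0 →
        ‖z‖ < 1}
      ⊆ convexHull ℝ
        {![(-3 : ℝ), 3, -1], ![(-1 : ℝ), -1, 1],
          ![(1 : ℝ), -1, -1], ![(3 : ℝ), 3, 1]} := by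
  intro x hx
  obtain ⟨r, a, b, hr, hquad, hx₀, hx₁, hx₂⟩ :=
    exists_linear_mul_quadratic_of_roots_norm_lt_one hx
  obtain ⟨ha, hb⟩ := abs_le_one_add_and_le_one_of_roots_norm_lt_one hquad
  have hx : x = ![a - r, b - a * r, -(b * r)] := by
    ext i
    fin_cases i <;> simp [hx₀, hx₁, hx₂]
  exact hx ▸ coeffs_linear_mul_quadratic_mem_convexHull hr.le ha hb
end

section
/- The degree-three discrete-time stability region is the image of the open unit cube (-1,1)³ under the multiaffine map f(k) = (k₂k₃ + k₁(1+k₂), k₂ + k₁k₃(1+k₂), k₃): for every k ∈ (-1,1)³, the polynomial z³ + f₁(k)z² + f₂(k)z + f₃(k) has all roots in the open unit disk. -/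
/-!
The coefficients `f(k)` are those of the third Levinson polynomial with reflection
coefficients `k₀, k₁, k₂`: starting from `P₀ = P₀* = 1`, set `Pₙ₊₁ = z Pₙ + kₙ Pₙ*` and
`Pₙ₊₁* = Pₙ* + kₙ z Pₙ`, where `Pₙ*` is the reversed polynomial. For real `c` one has
`|a + c b|² - |b + c a|² = (1 - c²)(|a|² - |b|²)`, so at a point with `|z| ≥ 1` and for
`|kₙ| < 1` the property `|Pₙ*(z)| ≤ |Pₙ(z)| ≠ 0` passes from `n` to `n + 1`; hence `P₃(z) ≠ 0`.
-/

open Complex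

lemma normSq_add_mul_sub_normSq_add_mul (a b : ℂ) (c : ℝ) :
    normSq (a + c * b) - normSq (b + c * a) = (1 - c ^ 2) * (normSq a - normSq b) := by
  simp only [normSq_apply, add_re, add_im, mul_re, mul_im, ofReal_re, ofReal_im]
  ring

lemma norm_add_mul_le_norm_add_mul {a b : ℂ} {c : ℝ} (hc : |c| ≤ 1) (hab : ‖b‖ ≤ ‖a‖) :
    ‖b + c * a‖ ≤ ‖a + c * b‖ := by
  have hc2 : 0 ≤ 1 - c ^ 2 := by nlinarith [sq_abs c, abs_nonneg c]
  have hsq : normSq b ≤ normSq a := by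
    rw [← Complex.sq_norm, ← Complex.sq_norm]; gcongr
  rw [← sq_le_sq₀ (norm_nonneg _) (norm_nonneg _), Complex.sq_norm, Complex.sq_norm]
  nlinarith [normSq_add_mul_sub_normSq_add_mul a b c]

lemma add_mul_ne_zero_of_norm_le {a b : ℂ} {c : ℝ} (hc : |c| < 1) (hab : ‖b‖ ≤ ‖a‖)
    (ha : a ≠ 0) : a + c * b ≠ 0 := by
  have hpos : 0 < (1 - |c|) * ‖a‖ := mul_pos (by linarith) (norm_pos_iff.mpr ha)
  refine norm_pos_iff.mp (hpos.trans_le ?_)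
  calc (1 - |c|) * ‖a‖ ≤ ‖a‖ - |c| * ‖b‖ := by nlinarith [abs_nonneg c]
    _ = ‖a‖ - ‖c * b‖ := by rw [norm_mul, norm_real, Real.norm_eq_abs]
    _ ≤ ‖a + c * b‖ := norm_sub_le_norm_add _ _

/-- One Levinson step on the pair `(Pₙ(z), Pₙ*(z))` with reflection coefficient `c`. -/
def schurStep (z : ℂ) (p : ℂ × ℂ) (c : ℝ) : ℂ × ℂ :=
  (z * p.1 + c * p.2, p.2 + c * (z * p.1))

def SchurDominant (p : ℂ × ℂ) : Prop :=
  ‖p.2‖ ≤ ‖p.1‖ ∧ p.1 ≠ 0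

lemma schurDominant_schurStep {z : ℂ} {p : ℂ × ℂ} {c : ℝ} (hz : 1 ≤ ‖z‖) (hc : |c| < 1)
    (hp : SchurDominant p) : SchurDominant (schurStep z p c) := by
  obtain ⟨hle, hne⟩ := hp
  have hle' : ‖p.2‖ ≤ ‖z * p.1‖ := by
    rw [norm_mul]; nlinarith [norm_nonneg p.1]
  have hz0 : z ≠ 0 := norm_pos_iff.mp (by linarith)
  exact ⟨norm_add_mul_le_norm_add_mul hc.le hle',
    add_mul_ne_zero_of_norm_le hc hle' (mul_ne_zero hz0 hne)⟩

lemma schurDominant_foldl_schurStep {z : ℂ} (hz : 1 ≤ ‖z‖) {cs : List ℝ}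
    (hcs : ∀ c ∈ cs, |c| < 1) {p : ℂ × ℂ} (hp : SchurDominant p) :
    SchurDominant (cs.foldl (schurStep z) p) := by
  induction cs generalizing p with
  | nil => exact hp
  | cons c cs ih =>
    exact ih (fun c' hc' => hcs c' (List.mem_cons_of_mem c hc'))
      (schurDominant_schurStep hz (hcs c List.mem_cons_self) hp)

/-- Stability of the image of the open unit cube under the multiaffine map
`f(k) = (k₂k₃ + k₁(1+k₂), k₂ + k₁k₃(1+k₂), k₃)`: if `‖k‖_∞ < 1` then all
complex roots of `z³ + f₁(k)z² + f₂(k)z + f₃(k)` have modulus `< 1`. -/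
theorem multiaffine_image_stable
    (k : Fin 3 → ℝ) (hk : ∀ i, |k i| < 1) :
    ∀ z : ℂ,
      z ^ 3 + ((k 1 * k 2 + k 0 * (1 + k 1) : ℝ) : ℂ) * z ^ 2
        + ((k 1 + k 0 * k 2 * (1 + k 1) : ℝ) : ℂ) * z + ((k 2 : ℝ) : ℂ) = 0 →
      ‖z‖ < 1 := by
  intro z hroot
  by_contra! hz
  have hcs : ∀ c ∈ [k 0, k 1, k 2], |c| < 1 := by simpa using ⟨hk 0, hk 1, hk 2⟩
  have hdom := schurDominant_foldl_schurStep hz hcs (p := (1, 1)) ⟨le_rfl, one_ne_zero⟩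
  refine hdom.2 (hroot ▸ ?_)
  simp only [List.foldl_cons, List.foldl_nil, schurStep]
  push_cast
  ring
end
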